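/- Let (W, ⟨·,·⟩_R) for R > 0 denote the inner products A_R(u,v) = ∫_{D(R)} u v on a fixed l-dimensional real vector space W of functions, with l > 1. Suppose that for all R ≥ 4R₀ and every A_{2R}-orthonormal basis u₁,…,u_l of W, Σᵢ ∫_{D(R)} uᵢ² < l/Γ̄, where Γ̄ > 1 is fixed. Then for all j ≥ 1 and R ≥ 4R₀, det_{A_R} A_{2^j R} ≥ Γ̄^{lj}, where det_{A_{R'}} A_{R''} denotes the determinant of the Gram matrix of A_{R''} in an A_{R'}-orthonormal basis. -/

import Mathlib

open Matrix Finset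
open scoped MatrixOrder

section gramAux
variable {W : Type*} [AddCommGroup W] [Module ℝ W]

/-- Gram matrix of a bilinear form in a family of vectors. -/
noncomputable def gramM {l : ℕ} (A : W →ₗ[ℝ] W →ₗ[ℝ] ℝ) (b : Fin l → W) :
    Matrix (Fin l) (Fin l) ℝ :=
  Matrix.of fun i k => A (b i) (b k)

lemma bilin_expand {l : ℕ} (A : W →ₗ[ℝ] W →ₗ[ℝ] ℝ) (b : Fin l → W) (x y : Fin l → ℝ) :
    A (∑ a, x a • b a) (∑ c, y c • b c) = ∑ a, ∑ c, x a * A (b a) (b c) * y c := by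
  simp only [map_sum, _root_.map_smul, LinearMap.sum_apply, LinearMap.smul_apply,
    smul_eq_mul, Finset.mul_sum, Finset.sum_mul]
  rw [Finset.sum_comm]
  exact Finset.sum_congr rfl fun c _ => Finset.sum_congr rfl fun a _ => by ring

lemma gramM_conj {l : ℕ} (A : W →ₗ[ℝ] W →ₗ[ℝ] ℝ) (b : Fin l → W)
    (Q : Matrix (Fin l) (Fin l) ℝ) :
    gramM A (fun i => ∑ k, Q i k • b k) = Q * gramM A b * Qᵀ := by
  ext i k
  show A (∑ a, Q i a • b a) (∑ c, Q k c • b c) = _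
  rw [bilin_expand]
  simp only [Matrix.mul_apply, Matrix.transpose_apply, Finset.sum_mul]
  rw [Finset.sum_comm]
  exact Finset.sum_congr rfl fun c _ => Finset.sum_congr rfl fun a _ => rfl

lemma gramM_posDef {l : ℕ} (A : W →ₗ[ℝ] W →ₗ[ℝ] ℝ)
    (hsymm : ∀ u v, A u v = A v u) (hpos : ∀ v : W, v ≠ 0 → 0 < A v v)
    (b : Module.Basis (Fin l) ℝ W) : (gramM A (⇑b)).PosDef := by
  refine Matrix.PosDef.of_dotProduct_mulVec_pos ?_ ?_
  · ext i k
    simp [gramM, Matrix.conjTranspose_apply, hsymm (b i) (b k)]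
  · intro x hx
    have hv : (∑ i, x i • b i) ≠ 0 := by
      intro h
      exact hx (funext fun i => Fintype.linearIndependent_iff.1 b.linearIndependent x h i)
    have h0 := hpos _ hv
    rw [bilin_expand] at h0
    have : ∑ a, ∑ c, x a * A (b a) (b c) * x c
        = dotProduct (star x) (gramM A (⇑b) *ᵥ x) := by
      simp only [dotProduct, Matrix.mulVec, gramM, Matrix.of_apply, star_trivial,
        Finset.mul_sum]
      refine Finset.sum_congr rfl fun a _ => Finset.sum_congr rfl fun c _ => ?_
      ring
    rwa [this] at h0

/-- From any basis `b`, produce a basis `c` orthonormal for `A`, conjugating all Gram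
matrices by the inverse square root `S⁻¹` of the Gram matrix of `A` in `b`. -/
lemma exists_conj_basis {l : ℕ} (A : W →ₗ[ℝ] W →ₗ[ℝ] ℝ)
    (hsymm : ∀ u v, A u v = A v u) (hpos : ∀ v : W, v ≠ 0 → 0 < A v v)
    (b : Module.Basis (Fin l) ℝ W) :
    ∃ (c : Module.Basis (Fin l) ℝ W) (S : Matrix (Fin l) (Fin l) ℝ),
      S * S = gramM A ⇑b ∧ IsUnit S.det ∧ gramM A ⇑c = 1 ∧
      ∀ B : W →ₗ[ℝ] W →ₗ[ℝ] ℝ, gramM B ⇑c = S⁻¹ * gramM B ⇑b * S⁻¹ := by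
  have hN := gramM_posDef A hsymm hpos b
  set N := gramM A ⇑b with hNdef
  set S := CFC.sqrt N with hSdef
  have hSS : S * S = N := CFC.sqrt_mul_sqrt_self N hN.posSemidef.nonneg
  have hSsym : Sᵀ = S := by
    have h := (CFC.sqrt_nonneg N).posSemidef.1
    ext i k
    simpa using congrFun (congrFun h i) k
  have hdet2 : S.det * S.det = N.det := by rw [← Matrix.det_mul, hSS]
  have hSdetne : S.det ≠ 0 := by
    intro h; rw [h, mul_zero] at hdet2; exact hN.det_pos.ne' hdet2.symm
  have hSdetU : IsUnit S.det := isUnit_iff_ne_zero.mpr hSdetne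
  have hQdetU : IsUnit ((S⁻¹)ᵀ).det := by
    rw [Matrix.det_transpose, Matrix.det_nonsing_inv, Ring.inverse_eq_inv]
    exact isUnit_iff_ne_zero.mpr (inv_ne_zero hSdetne)
  set e := Matrix.toLinearEquiv b ((S⁻¹)ᵀ) hQdetU with hedef
  have hc : ⇑(b.map e) = fun i => ∑ k, (S⁻¹) i k • b k := by
    funext i
    rw [Module.Basis.map_apply, hedef, Matrix.toLinearEquiv_apply, Matrix.toLin_self]
    exact Finset.sum_congr rfl fun k _ => by rw [Matrix.transpose_apply]
  have hconj : ∀ B : W →ₗ[ℝ] W →ₗ[ℝ] ℝ,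
      gramM B ⇑(b.map e) = S⁻¹ * gramM B ⇑b * S⁻¹ := fun B => by
    rw [hc, gramM_conj, Matrix.transpose_nonsing_inv, hSsym]
  have hone : gramM A ⇑(b.map e) = 1 := by
    rw [hconj A, ← hNdef, ← hSS]
    have h1 : S⁻¹ * (S * S) = S := by
      rw [← Matrix.mul_assoc, Matrix.nonsing_inv_mul _ hSdetU, Matrix.one_mul]
    rw [h1, Matrix.mul_nonsing_inv _ hSdetU]
  exact ⟨b.map e, S, hSS, hSdetU, hone, hconj⟩

end gramAux

lemma trace_eq_sum_eigenvalues' {n : Type*} [Fintype n] [DecidableEq n] {K : Matrix n n ℝ}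
    (hK : K.IsHermitian) : K.trace = ∑ i, hK.eigenvalues i := by
  simpa using hK.trace_eq_sum_eigenvalues

lemma amgm_det {n : Type*} [Fintype n] [DecidableEq n] (hc : 0 < Fintype.card n)
    {K : Matrix n n ℝ} (hK : K.PosDef) :
    K.det ≤ (K.trace / (Fintype.card n)) ^ (Fintype.card n) := by
  set c := Fintype.card n with hcdef
  have hz : ∀ i : n, 0 < hK.1.eigenvalues i := hK.eigenvalues_pos
  have hdet : K.det = ∏ i, hK.1.eigenvalues i := by
    simpa using hK.1.det_eq_prod_eigenvalues
  have htr : K.trace = ∑ i, hK.1.eigenvalues i := trace_eq_sum_eigenvalues' hK.1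
  have hcR : (0:ℝ) < c := by exact_mod_cast hc
  have hgm := Real.geom_mean_le_arith_mean_weighted Finset.univ (fun _ => 1 / (c:ℝ))
      (fun i => hK.1.eigenvalues i) (fun i _ => by positivity)
      (by simp [Finset.card_univ, hcdef]; rw [← hcdef]; exact div_self hcR.ne') (fun i _ => (hz i).le)
  have hprod : ∏ i : n, (hK.1.eigenvalues i) ^ (1 / (c:ℝ))
      = (∏ i : n, hK.1.eigenvalues i) ^ (1 / (c:ℝ)) := by
    rw [← Real.finset_prod_rpow _ _ (fun i _ => (hz i).le)]
  have hsum : ∑ i : n, (1 / (c:ℝ)) * hK.1.eigenvalues i = K.trace / c := by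
    rw [htr, ← Finset.mul_sum]
    ring
  rw [hprod, hsum] at hgm
  have hdpos : 0 < ∏ i : n, hK.1.eigenvalues i := Finset.prod_pos fun i _ => hz i
  have h1 := Real.rpow_le_rpow (Real.rpow_nonneg hdpos.le _) hgm (Nat.cast_nonneg c)
  rw [← Real.rpow_mul hdpos.le, one_div, inv_mul_cancel₀ hcR.ne', Real.rpow_one,
    Real.rpow_natCast] at h1
  rw [hdet]
  exact h1

/-- One doubling step: if `b` is `A_R`-orthonormal, then `det (Gram of A_{2R} in b) ≥ Γ^l`. -/
lemma step_lemma {W : Type*} [AddCommGroup W] [Module ℝ W] {l : ℕ} (hl : 0 < l)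
    (A : ℝ → W →ₗ[ℝ] W →ₗ[ℝ] ℝ)
    (hsymm : ∀ R u v, A R u v = A R v u)
    (hposdef : ∀ R : ℝ, 0 < R → ∀ v : W, v ≠ 0 → 0 < A R v v)
    (R₀ Γ : ℝ) (hR₀ : 0 < R₀) (hΓ : 1 < Γ)
    (hsmall : ∀ R : ℝ, 4 * R₀ ≤ R → ∀ b : Module.Basis (Fin l) ℝ W,
      (∀ i j, A (2 * R) (b i) (b j) = if i = j then 1 else 0) →
      ∑ i, A R (b i) (b i) < l / Γ)
    (R : ℝ) (hR : 4 * R₀ ≤ R) (b : Module.Basis (Fin l) ℝ W)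
    (hb : gramM (A R) ⇑b = 1) :
    Γ ^ l ≤ (gramM (A (2 * R)) ⇑b).det := by
  have hRpos : 0 < R := lt_of_lt_of_le (by linarith) hR
  have h2R : (0:ℝ) < 2 * R := by linarith
  obtain ⟨c, S, hSS, hSdetU, hone, hconj⟩ :=
    exists_conj_basis (A (2 * R)) (hsymm _) (fun v hv => hposdef _ h2R v hv) b
  have hN : (gramM (A (2 * R)) ⇑b).PosDef :=
    gramM_posDef _ (hsymm _) (fun v hv => hposdef _ h2R v hv) b
  set N := gramM (A (2 * R)) ⇑b with hNdef
  have hNdetpos : 0 < N.det := hN.det_pos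
  have hcsmall := hsmall R hR c (fun i j => by
    have h := congrFun (congrFun hone i) j
    simpa [gramM, Matrix.one_apply] using h)
  have htr : ∑ i, A R (c i) (c i) = (N⁻¹).trace := by
    have h2 : gramM (A R) ⇑c = S⁻¹ * S⁻¹ := by rw [hconj (A R), hb, Matrix.mul_one]
    have h3 : N⁻¹ = S⁻¹ * S⁻¹ := by rw [← hSS, Matrix.mul_inv_rev]
    have h4 : (gramM (A R) ⇑c).trace = ∑ i, A R (c i) (c i) := by
      simp [gramM, Matrix.trace, Matrix.diag]
    rw [← h4, h2, h3]
  rw [htr] at hcsmall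
  have hK : (N⁻¹).PosDef := hN.inv
  have hΓpos : (0:ℝ) < Γ := lt_trans one_pos hΓ
  have hlpos : (0:ℝ) < l := by exact_mod_cast hl
  have htrpos : 0 < (N⁻¹).trace := by
    rw [trace_eq_sum_eigenvalues' hK.1]
    have : Nonempty (Fin l) := ⟨⟨0, hl⟩⟩
    exact Finset.sum_pos (fun i _ => hK.eigenvalues_pos i) Finset.univ_nonempty
  have hdiv : (N⁻¹).trace / l ≤ 1 / Γ := by
    rw [div_le_div_iff₀ hlpos hΓpos]
    have h := (lt_div_iff₀ hΓpos).mp hcsmall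
    linarith
  have hamgm := amgm_det (n := Fin l) (by simp [hl]) hK
  rw [Fintype.card_fin] at hamgm
  have hpow : ((N⁻¹).trace / l) ^ l ≤ (1 / Γ) ^ l :=
    pow_le_pow_left₀ (by positivity) hdiv l
  have hdetK : (N⁻¹).det ≤ (Γ ^ l)⁻¹ := by
    have : ((1:ℝ) / Γ) ^ l = (Γ ^ l)⁻¹ := by rw [one_div, inv_pow]
    calc (N⁻¹).det ≤ ((N⁻¹).trace / l) ^ l := hamgm
      _ ≤ (1 / Γ) ^ l := hpow
      _ = (Γ ^ l)⁻¹ := this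
  rw [Matrix.det_nonsing_inv, Ring.inverse_eq_inv] at hdetK
  exact (inv_le_inv₀ hNdetpos (pow_pos hΓpos l)).mp hdetK

/-- Trace–determinant iteration in Lemma 5.1: if for every `R ≥ 4R₀` and every
`A_{2R}`-orthonormal basis `(uᵢ)` one has `Σᵢ A_R(uᵢ,uᵢ) < l/Γ̄`, then for all
`j ≥ 1`, `R ≥ 4R₀` and every `A_R`-orthonormal basis `b`,
`det (A_{2^j R}(bᵢ, bₖ)) ≥ Γ̄^{lj}`. -/
theorem stmt13 {W : Type*} [AddCommGroup W] [Module ℝ W]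
    [FiniteDimensional ℝ W] (l : ℕ) (hl : 1 < l)
    (hdim : Module.finrank ℝ W = l)
    (A : ℝ → W →ₗ[ℝ] W →ₗ[ℝ] ℝ)
    (hsymm : ∀ R u v, A R u v = A R v u)
    (hposdef : ∀ R : ℝ, 0 < R → ∀ v : W, v ≠ 0 → 0 < A R v v)
    (R₀ Γ : ℝ) (hR₀ : 0 < R₀) (hΓ : 1 < Γ)
    (hsmall : ∀ R : ℝ, 4 * R₀ ≤ R → ∀ b : Module.Basis (Fin l) ℝ W,
      (∀ i j, A (2 * R) (b i) (b j) = if i = j then 1 else 0) →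
      ∑ i, A R (b i) (b i) < l / Γ) :
    ∀ j : ℕ, 1 ≤ j → ∀ R : ℝ, 4 * R₀ ≤ R → ∀ b : Module.Basis (Fin l) ℝ W,
      (∀ i k, A R (b i) (b k) = if i = k then 1 else 0) →
      Γ ^ (l * j) ≤ Matrix.det (Matrix.of fun i k => A ((2:ℝ) ^ j * R) (b i) (b k)) := by
  have hl0 : 0 < l := lt_trans zero_lt_one hl
  intro j hj
  induction j, hj using Nat.le_induction with
  | base =>
    intro R hR b hb
    have hb' : gramM (A R) ⇑b = 1 := by
      ext i k; simpa [gramM, Matrix.one_apply] using hb i k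
    have h := step_lemma hl0 A hsymm hposdef R₀ Γ hR₀ hΓ hsmall R hR b hb'
    have h2 : (2:ℝ) ^ 1 * R = 2 * R := by ring
    rw [mul_one, h2]
    exact h
  | succ j hj ih =>
    intro R hR b hb
    have hRpos : 0 < R := lt_of_lt_of_le (by linarith) hR
    have h2R : (0:ℝ) < 2 * R := by linarith
    have hR2 : 4 * R₀ ≤ 2 * R := by linarith
    have hb' : gramM (A R) ⇑b = 1 := by
      ext i k; simpa [gramM, Matrix.one_apply] using hb i k
    obtain ⟨c, S, hSS, hSdetU, hone, hconj⟩ :=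
      exists_conj_basis (A (2 * R)) (hsymm _) (fun v hv => hposdef _ h2R v hv) b
    have hN : (gramM (A (2 * R)) ⇑b).PosDef :=
      gramM_posDef _ (hsymm _) (fun v hv => hposdef _ h2R v hv) b
    have hNdetpos : 0 < (gramM (A (2 * R)) ⇑b).det := hN.det_pos
    have hstep : Γ ^ l ≤ (gramM (A (2 * R)) ⇑b).det :=
      step_lemma hl0 A hsymm hposdef R₀ Γ hR₀ hΓ hsmall R hR b hb'
    have ihc := ih (2 * R) hR2 c (fun i k => by
      have h := congrFun (congrFun hone i) k
      simpa [gramM, Matrix.one_apply] using h)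
    have hpowR : (2:ℝ) ^ j * (2 * R) = (2:ℝ) ^ (j + 1) * R := by ring
    rw [hpowR] at ihc
    have ihc' : Γ ^ (l * j) ≤ (gramM (A ((2:ℝ) ^ (j + 1) * R)) ⇑c).det := ihc
    -- determinant relation
    have hdetSinv : (S⁻¹).det * (S⁻¹).det = ((gramM (A (2 * R)) ⇑b).det)⁻¹ := by
      rw [Matrix.det_nonsing_inv, Ring.inverse_eq_inv, ← mul_inv, ← Matrix.det_mul, hSS]
    have hdetc : (gramM (A ((2:ℝ) ^ (j + 1) * R)) ⇑c).det
        = ((gramM (A (2 * R)) ⇑b).det)⁻¹ * (gramM (A ((2:ℝ) ^ (j + 1) * R)) ⇑b).det := by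
      rw [hconj (A ((2:ℝ) ^ (j + 1) * R)), Matrix.det_mul, Matrix.det_mul]
      rw [show (S⁻¹).det * (gramM (A ((2:ℝ) ^ (j + 1) * R)) ⇑b).det * (S⁻¹).det
        = (S⁻¹).det * (S⁻¹).det * (gramM (A ((2:ℝ) ^ (j + 1) * R)) ⇑b).det by ring, hdetSinv]
    have hfinal : Γ ^ (l * j) * Γ ^ l
        ≤ (gramM (A ((2:ℝ) ^ (j + 1) * R)) ⇑c).det * (gramM (A (2 * R)) ⇑b).det := by
      apply mul_le_mul ihc' hstep (pow_nonneg (by linarith) l)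
      exact le_trans (pow_nonneg (by linarith) _) ihc'
    rw [hdetc] at hfinal
    have hGe : (gramM (A ((2:ℝ) ^ (j + 1) * R)) ⇑b).det
        = ((gramM (A (2 * R)) ⇑b).det)⁻¹ * (gramM (A ((2:ℝ) ^ (j + 1) * R)) ⇑b).det
          * (gramM (A (2 * R)) ⇑b).det := by
      rw [mul_right_comm, inv_mul_cancel₀ hNdetpos.ne', one_mul]
    have : Γ ^ (l * (j + 1)) ≤ (gramM (A ((2:ℝ) ^ (j + 1) * R)) ⇑b).det := by
      rw [show l * (j + 1) = l * j + l by ring, pow_add, hGe]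
      exact hfinal
    exact this
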